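/- If b* is an integer with −1 ≤ 2b* − B sinθ ≤ 1 (so that the anchor subcarrier direction is within half a subcarrier of sinθ), then the beamforming gain F_N(π(2b*/B − sinθ)) is at least F_N evaluated at π/B; in particular when N ≤ B the anchor subcarrier gain is at least F_N(π/B) = (sin(Nπ/(2B))/sin(π/(2B)))². -/

import Mathlib

/-!
`F_N(x) = ‖∑_{k<N} e^{ikx}‖²`: multiplying the geometric sum by `e^{ix} - 1` and using
`|e^{iy} - 1| = 2|sin(y/2)|` gives the closed form. Expanding the square instead gives
`F_N(x) = ∑_{j,k<N} cos((j-k)x)`, which is even and, since `|j-k| < N`, termwise decreasing on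
`[0, π/N]`. The anchor offset `π(2b*/B - sin θ)` has absolute value at most `π/B ≤ π/N`.
-/

/-- Fejér kernel, extended by continuity (value `N²`) where `sin (x/2) = 0`. -/
noncomputable def fejer (N : ℕ) (x : ℝ) : ℝ :=
  if Real.sin (x / 2) = 0 then (N : ℝ) ^ 2
  else (Real.sin (N * x / 2) / Real.sin (x / 2)) ^ 2

open Real Finset

lemma norm_sum_exp_ofReal_mul_I_sq {ι : Type*} (s : Finset ι) (θ : ι → ℝ) :
    ‖∑ j ∈ s, Complex.exp (θ j * Complex.I)‖ ^ 2 = ∑ j ∈ s, ∑ k ∈ s, cos (θ j - θ k) := by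
  have hconj (k : ι) :
      (starRingEnd ℂ) (Complex.exp (θ k * Complex.I)) = Complex.exp (-θ k * Complex.I) := by
    rw [← Complex.exp_conj]; simp
  have hprod (j k : ι) : Complex.exp (θ j * Complex.I) * Complex.exp (-θ k * Complex.I)
      = Complex.exp ((θ j - θ k : ℝ) * Complex.I) := by
    rw [← Complex.exp_add]; push_cast; ring_nf
  rw [Complex.sq_norm, ← Complex.ofReal_re (Complex.normSq _), ← Complex.mul_conj, map_sum,
    sum_mul_sum]
  simp only [hconj, hprod, Complex.re_sum, Complex.exp_ofReal_mul_I_re]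

lemma fejer_mul_sin_sq (N : ℕ) (x : ℝ) :
    sin (x / 2) ^ 2 * ‖∑ k ∈ range N, Complex.exp ((k * x : ℝ) * Complex.I)‖ ^ 2
      = sin (N * x / 2) ^ 2 := by
  have hpow (n : ℕ) :
      Complex.exp ((n * x : ℝ) * Complex.I) = Complex.exp (x * Complex.I) ^ n := by
    rw [← Complex.exp_nat_mul]; push_cast; ring_nf
  have hchord (y : ℝ) : ‖Complex.exp (y * Complex.I) - 1‖ = |2 * sin (y / 2)| := by
    rw [mul_comm, Complex.norm_exp_I_mul_ofReal_sub_one, Real.norm_eq_abs]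
  calc sin (x / 2) ^ 2 * ‖∑ k ∈ range N, Complex.exp ((k * x : ℝ) * Complex.I)‖ ^ 2
      = (‖∑ k ∈ range N, Complex.exp (x * Complex.I) ^ k‖
          * ‖Complex.exp (x * Complex.I) - 1‖) ^ 2 / 4 := by
        simp only [hpow, hchord, mul_pow, sq_abs]; ring
    _ = ‖Complex.exp ((N * x : ℝ) * Complex.I) - 1‖ ^ 2 / 4 := by
        rw [← norm_mul, geom_sum_mul, hpow]
    _ = sin (N * x / 2) ^ 2 := by rw [hchord, sq_abs]; ring

lemma fejer_eq_norm_sq (N : ℕ) (x : ℝ) :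
    fejer N x = ‖∑ k ∈ range N, Complex.exp ((k * x : ℝ) * Complex.I)‖ ^ 2 := by
  unfold fejer
  split_ifs with hx
  · obtain ⟨m, hm⟩ := sin_eq_zero_iff.mp hx
    obtain rfl : x = m * (2 * π) := by linarith
    have hk (k : ℕ) : Complex.exp ((k * (m * (2 * π)) : ℝ) * Complex.I) = 1 :=
      Complex.exp_eq_one_iff.mpr ⟨k * m, by push_cast; ring⟩
    simp only [hk, sum_const, card_range, nsmul_eq_mul, mul_one, Complex.norm_natCast]
  · rw [div_pow, ← fejer_mul_sin_sq, mul_div_cancel_left₀ _ (pow_ne_zero 2 hx)]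

lemma fejer_eq_sum_cos (N : ℕ) (x : ℝ) :
    fejer N x = ∑ j ∈ range N, ∑ k ∈ range N, cos ((j - k : ℝ) * x) := by
  simp only [fejer_eq_norm_sq, norm_sum_exp_ofReal_mul_I_sq, sub_mul]

lemma fejer_neg (N : ℕ) (x : ℝ) : fejer N (-x) = fejer N x := by
  simp only [fejer_eq_sum_cos, mul_neg, cos_neg]

lemma fejer_abs (N : ℕ) (x : ℝ) : fejer N |x| = fejer N x := by
  rcases abs_choice x with h | h <;> rw [h]
  exact fejer_neg N x

lemma fejer_antitoneOn (N : ℕ) : AntitoneOn (fejer N) (Set.Icc 0 (π / N)) := by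
  rintro a ⟨ha, -⟩ b ⟨hb, hbN⟩ hab
  simp only [fejer_eq_sum_cos]
  refine sum_le_sum fun j hj => sum_le_sum fun k hk => ?_
  have hj : (j : ℝ) < N := by exact_mod_cast mem_range.mp hj
  have hk : (k : ℝ) < N := by exact_mod_cast mem_range.mp hk
  have hjk : |(j - k : ℝ)| ≤ N :=
    abs_sub_le_iff.mpr
      ⟨by linarith [k.cast_nonneg (α := ℝ)], by linarith [j.cast_nonneg (α := ℝ)]⟩
  have hcos {t : ℝ} (ht : 0 ≤ t) : cos ((j - k : ℝ) * t) = cos (|(j - k : ℝ)| * t) := by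
    rw [← cos_abs, abs_mul, abs_of_nonneg ht]
  rw [hcos ha, hcos hb]
  refine cos_le_cos_of_nonneg_of_le_pi (by positivity) ?_
    (mul_le_mul_of_nonneg_left hab (abs_nonneg _))
  calc |(j - k : ℝ)| * b ≤ N * (π / N) := mul_le_mul hjk hbN hb (Nat.cast_nonneg N)
    _ = π := mul_div_cancel₀ π (by linarith)

theorem anchor_gain_ge_general (N B : ℕ) (hN : 1 ≤ N) (hNB : N ≤ B)
    (θ : ℝ) (bstar : ℤ) (hb : |2 * (bstar : ℝ) - B * Real.sin θ| ≤ 1) :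
    fejer N (Real.pi / B) ≤ fejer N (Real.pi * (2 * (bstar : ℝ) / B - Real.sin θ)) := by
  have hNpos : (0 : ℝ) < N := by exact_mod_cast hN
  have hBpos : (0 : ℝ) < B := by exact_mod_cast hN.trans hNB
  have hBN : π / B ≤ π / N := div_le_div_of_nonneg_left pi_pos.le hNpos (by exact_mod_cast hNB)
  have hx : |π * (2 * bstar / B - sin θ)| ≤ π / B := by
    rw [show π * (2 * bstar / B - sin θ) = π / B * (2 * bstar - B * sin θ) by field_simp,
      abs_mul, abs_of_pos (by positivity)]
    exact mul_le_of_le_one_right (by positivity) hb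
  rw [← fejer_abs N (π * _)]
  exact fejer_antitoneOn N ⟨abs_nonneg _, hx.trans hBN⟩ ⟨by positivity, hBN⟩ hx

/-- The anchor subcarrier gain is at least `F_N(π/B)`. -/
theorem anchor_gain_ge (N B : ℕ) (hN : 1 ≤ N) (hNB : N ≤ B)
    (θ : ℝ) (hθ : θ ∈ Set.Ioo (-(Real.pi / 2)) (Real.pi / 2))
    (bstar : ℤ) (hb : |2 * (bstar : ℝ) - B * Real.sin θ| ≤ 1) :
    fejer N (Real.pi / B) ≤ fejer N (Real.pi * (2 * (bstar : ℝ) / B - Real.sin θ)) :=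
  anchor_gain_ge_general N B hN hNB θ bstar hb
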